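/- Let $M = \{x \in \mathbb{R}^2 \mid 1 \leq |x| \leq 2\}$ and let $\omega : M \to \mathbb{R}$ be continuous. Then the Biot–Savart field $\tilde{v}(x) = \frac{1}{2\pi} \int_M |x - \tilde{x}|^{-2}\, \omega(\tilde{x})\, (-(x_2 - \tilde{x}_2), x_1 - \tilde{x}_1)\, d\tilde{x}$ has zero flux through each boundary circle of the annulus: for $r \in \{1, 2\}$, $\int_0^{2\pi} \tilde{v}\big(r\cos\theta, r\sin\theta\big) \cdot (\cos\theta, \sin\theta)\, r\, d\theta = 0$. -/

import Mathlib

open MeasureTheory Real Set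

/-- The closed annulus `M = {x ∈ ℝ² | 1 ≤ |x| ≤ 2}`. -/
def annulus : Set (ℝ × ℝ) :=
  {p | 1 ≤ Real.sqrt (p.1 ^ 2 + p.2 ^ 2) ∧ Real.sqrt (p.1 ^ 2 + p.2 ^ 2) ≤ 2}

/-- First component of the Biot–Savart field of vorticity `ω` on the annulus. -/
noncomputable def biotSavart₁ (ω : ℝ × ℝ → ℝ) (x : ℝ × ℝ) : ℝ :=
  (1 / (2 * π)) *
    ∫ y in annulus, ω y * (-(x.2 - y.2)) / ((x.1 - y.1) ^ 2 + (x.2 - y.2) ^ 2)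

/-- Second component of the Biot–Savart field of vorticity `ω` on the annulus. -/
noncomputable def biotSavart₂ (ω : ℝ × ℝ → ℝ) (x : ℝ × ℝ) : ℝ :=
  (1 / (2 * π)) *
    ∫ y in annulus, ω y * (x.1 - y.1) / ((x.1 - y.1) ^ 2 + (x.2 - y.2) ^ 2)

/-!
Swapping the two integrals (Fubini), the flux becomes `∫ y in annulus, ω y * Φ y`, where `Φ y` is
the flux through the circle of radius `r` of a point vortex at `y`. For `y` off the circle, the
flux density of that vortex is the `θ`-derivative of the `2π`-periodic function
`-log |x(θ) - y|² / 2`, so `Φ y = 0`; the circle itself is Lebesgue-null. Fubini applies because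
the integrand is bounded by `2 |r| sup |ω| / ‖x(θ) - y‖`, and `‖·‖⁻¹` is integrable near `0` in
the plane, uniformly under translation.
-/

open Metric Module

lemma norm_le_two_of_mem_annulus {y : ℝ × ℝ} (hy : y ∈ annulus) : ‖y‖ ≤ 2 := by
  rw [Prod.norm_def, Real.norm_eq_abs, Real.norm_eq_abs, max_le_iff]
  exact ⟨(Real.abs_le_sqrt (by nlinarith [sq_nonneg y.2])).trans hy.2,
    (Real.abs_le_sqrt (by nlinarith [sq_nonneg y.1])).trans hy.2⟩

lemma isClosed_annulus : IsClosed annulus :=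
  isClosed_Icc.preimage (f := fun p : ℝ × ℝ => √(p.1 ^ 2 + p.2 ^ 2)) (by fun_prop)

lemma isCompact_annulus : IsCompact annulus :=
  isCompact_of_isClosed_isBounded isClosed_annulus <| isBounded_closedBall.subset
    fun _ hy => mem_closedBall_zero_iff.2 (norm_le_two_of_mem_annulus hy)

lemma measurableSet_annulus : MeasurableSet annulus := isClosed_annulus.measurableSet

lemma sq_norm_le_sq_add_sq (z : ℝ × ℝ) : ‖z‖ ^ 2 ≤ z.1 ^ 2 + z.2 ^ 2 := by
  rcases max_choice ‖z.1‖ ‖z.2‖ with h | h <;>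
    rw [Prod.norm_def, h, Real.norm_eq_abs, sq_abs] <;> nlinarith [sq_nonneg z.1, sq_nonneg z.2]

lemma abs_mul_div_sq_add_sq_le {z : ℝ × ℝ} {w c C K : ℝ} (hw : |w| ≤ C)
    (hc : |c| ≤ K * ‖z‖) : |w * c / (z.1 ^ 2 + z.2 ^ 2)| ≤ C * K * ‖z‖⁻¹ := by
  rcases eq_or_ne z 0 with rfl | hz₀
  · simp -- `c / 0 = 0` and `0⁻¹ = 0`, so the bound needs no exceptional point
  have hz : 0 < ‖z‖ := norm_pos_iff.2 hz₀
  have hC : 0 ≤ C := (abs_nonneg w).trans hw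
  have hKz : 0 ≤ K * ‖z‖ := (abs_nonneg c).trans hc
  have hD : ‖z‖ ^ 2 ≤ z.1 ^ 2 + z.2 ^ 2 := sq_norm_le_sq_add_sq z
  rw [abs_div, abs_mul, abs_of_pos ((pow_pos hz 2).trans_le hD)]
  calc |w| * |c| / (z.1 ^ 2 + z.2 ^ 2) ≤ C * (K * ‖z‖) / ‖z‖ ^ 2 := by gcongr
    _ = C * K * ‖z‖⁻¹ := by field_simp

lemma inv_norm_sub_eq_indicator {E : Type*} [SeminormedAddCommGroup E] {x y : E} {ρ σ : ℝ}
    (hx : ‖x‖ ≤ ρ) (hy : ‖y‖ ≤ σ) :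
    ‖x - y‖⁻¹ = (closedBall 0 (ρ + σ)).indicator (fun z => ‖z‖⁻¹) (x - y) :=
  (indicator_of_mem (f := fun z : E => ‖z‖⁻¹) <|
    mem_closedBall_zero_iff.2 ((norm_sub_le x y).trans (add_le_add hx hy))).symm

lemma integrable_indicator_closedBall_inv_norm {E : Type*} [NormedAddCommGroup E]
    [NormedSpace ℝ E] [FiniteDimensional ℝ E] [MeasurableSpace E] [BorelSpace E]
    (μ : Measure E) [μ.IsAddHaarMeasure] (hE : 2 ≤ finrank ℝ E) (R : ℝ) :
    Integrable ((closedBall (0 : E) R).indicator fun z => ‖z‖⁻¹) μ := by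
  have hloc : LocallyIntegrable (fun z : E => ‖z‖⁻¹) μ := by
    refine locallyIntegrable_of_norm_le_rpow (C := 1) (α := 1) (by omega)
      (by exact_mod_cast hE) (.of_forall fun z => ?_) measurable_norm.inv.aestronglyMeasurable
    simp [Real.rpow_neg_one]
  exact (hloc.integrableOn_isCompact (isCompact_closedBall 0 R)).integrable_indicator
    measurableSet_closedBall

lemma MeasureTheory.Integrable.comp_sub_prod {α G : Type*} [MeasurableSpace α]
    [MeasurableSpace G] [AddGroup G] [MeasurableAdd G] [MeasurableNeg G] [MeasurableSub₂ G]
    {μ : Measure α} [IsFiniteMeasure μ] {ν : Measure G} [SFinite ν] [ν.IsNegInvariant]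
    [ν.IsAddLeftInvariant] {f : G → ℝ}
    (hf : Integrable f ν) (hfm : Measurable f) {g : α → G} (hg : Measurable g) :
    Integrable (fun p : α × G => f (g p.1 - p.2)) (μ.prod ν) := by
  have hm : Measurable fun p : α × G => f (g p.1 - p.2) := by fun_prop
  refine (integrable_prod_iff hm.aestronglyMeasurable).2
    ⟨.of_forall fun θ => hf.comp_sub_left (g θ), ?_⟩
  have hconst (θ : α) : ∫ y, ‖f (g θ - y)‖ ∂ν = ∫ z, ‖f z‖ ∂ν :=
    integral_sub_left_eq_self (fun z => ‖f z‖) ν (g θ)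
  simp_rw [hconst]
  exact integrable_const _

lemma volume_setOf_sq_add_sq_eq (r : ℝ) :
    volume {y : ℝ × ℝ | y.1 ^ 2 + y.2 ^ 2 = r ^ 2} = 0 := by
  have : {y : ℝ × ℝ | y.1 ^ 2 + y.2 ^ 2 = r ^ 2} =
      Complex.measurableEquivRealProd.symm ⁻¹' sphere 0 |r| := by
    ext y
    simp [← sq_eq_sq₀ (norm_nonneg _) (abs_nonneg r), Complex.sq_norm, Complex.normSq_apply,
      ← sq]
  rw [this, Complex.volume_preserving_equiv_real_prod.symm.measure_preimage
    isClosed_sphere.measurableSet.nullMeasurableSet, Measure.addHaar_sphere]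

lemma integrableOn_annulus_of_abs_le_inv_norm_sub {f : ℝ × ℝ → ℝ}
    (hf : AEStronglyMeasurable f (volume.restrict annulus)) (x : ℝ × ℝ) {C : ℝ}
    (hb : ∀ y ∈ annulus, |f y| ≤ C * ‖x - y‖⁻¹) : IntegrableOn f annulus := by
  have hmaj := ((integrable_indicator_closedBall_inv_norm volume (by simp)
    (‖x‖ + 2)).comp_sub_left x).const_mul C
  refine hmaj.integrableOn.mono' hf ?_
  filter_upwards [ae_restrict_mem measurableSet_annulus] with y hy
  rw [← inv_norm_sub_eq_indicator le_rfl (norm_le_two_of_mem_annulus hy)]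
  exact hb y hy

lemma integrable_prod_annulus_of_abs_le_inv_norm_sub {α : Type*} [MeasurableSpace α]
    {μ : Measure α} [IsFiniteMeasure μ] {F : α × (ℝ × ℝ) → ℝ}
    (hF : AEStronglyMeasurable F (μ.prod (volume.restrict annulus))) {x : α → ℝ × ℝ}
    (hx : Measurable x) {ρ C : ℝ} (hxρ : ∀ θ, ‖x θ‖ ≤ ρ)
    (hb : ∀ θ, ∀ y ∈ annulus, |F (θ, y)| ≤ C * ‖x θ - y‖⁻¹) :
    Integrable F (μ.prod (volume.restrict annulus)) := by
  have hmaj := ((integrable_indicator_closedBall_inv_norm volume (by simp)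
    (ρ + 2)).comp_sub_prod (μ := μ) ((measurable_norm.inv).indicator measurableSet_closedBall)
    hx).const_mul C
  refine (hmaj.mono_measure (Measure.prod_mono le_rfl Measure.restrict_le_self)).mono' hF ?_
  filter_upwards [Measure.quasiMeasurePreserving_snd.ae (ae_restrict_mem measurableSet_annulus)]
    with p hp
  rw [← inv_norm_sub_eq_indicator (hxρ p.1) (norm_le_two_of_mem_annulus hp)]
  exact hb p.1 p.2 hp

/-- `r` times the normal component of the point-vortex field `(x - y)^⊥ / |x - y|²`
at `x = (r cos θ, r sin θ)`. -/
noncomputable def fluxKernel (r θ : ℝ) (y : ℝ × ℝ) : ℝ :=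
  (-(r * sin θ - y.2) * cos θ + (r * cos θ - y.1) * sin θ) * r /
    ((r * cos θ - y.1) ^ 2 + (r * sin θ - y.2) ^ 2)

lemma abs_mul_fluxKernel_le {w C : ℝ} (hw : |w| ≤ C) (r θ : ℝ) (y : ℝ × ℝ) :
    |w * fluxKernel r θ y| ≤ C * (2 * |r|) * ‖(r * cos θ, r * sin θ) - y‖⁻¹ := by
  rw [fluxKernel, ← mul_div_assoc]
  refine abs_mul_div_sq_add_sq_le (z := (r * cos θ, r * sin θ) - y) hw ?_
  set z := (r * cos θ, r * sin θ) - y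
  have h₁ : |(r * cos θ - y.1) * sin θ| ≤ ‖z‖ := by
    rw [abs_mul]
    exact (mul_le_of_le_one_right (abs_nonneg _) (abs_sin_le_one θ)).trans (norm_fst_le z)
  have h₂ : |-(r * sin θ - y.2) * cos θ| ≤ ‖z‖ := by
    rw [abs_mul, abs_neg]
    exact (mul_le_of_le_one_right (abs_nonneg _) (abs_cos_le_one θ)).trans (norm_snd_le z)
  have h : |-(r * sin θ - y.2) * cos θ + (r * cos θ - y.1) * sin θ| ≤ 2 * ‖z‖ :=
    (abs_add_le _ _).trans (by linarith)
  rw [abs_mul]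
  nlinarith [abs_nonneg r]

lemma sq_add_sq_ne_zero_of_ne_sq {r : ℝ} {y : ℝ × ℝ} (hy : y.1 ^ 2 + y.2 ^ 2 ≠ r ^ 2)
    (θ : ℝ) :
    (r * cos θ - y.1) ^ 2 + (r * sin θ - y.2) ^ 2 ≠ 0 := by
  intro h
  obtain ⟨h₁, h₂⟩ := (add_eq_zero_iff_of_nonneg (sq_nonneg _) (sq_nonneg _)).1 h
  apply hy
  rw [← sub_eq_zero.1 ((pow_eq_zero_iff two_ne_zero).1 h₁),
    ← sub_eq_zero.1 ((pow_eq_zero_iff two_ne_zero).1 h₂)]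
  linear_combination r ^ 2 * sin_sq_add_cos_sq θ

lemma hasDerivAt_neg_log_sq_add_sq_div_two {r : ℝ} {y : ℝ × ℝ} {θ : ℝ}
    (hθ : (r * cos θ - y.1) ^ 2 + (r * sin θ - y.2) ^ 2 ≠ 0) :
    HasDerivAt (fun θ => -log ((r * cos θ - y.1) ^ 2 + (r * sin θ - y.2) ^ 2) / 2)
      (fluxKernel r θ y) θ := by
  have hD : HasDerivAt (fun θ => (r * cos θ - y.1) ^ 2 + (r * sin θ - y.2) ^ 2)
      (2 * (r * cos θ - y.1) * (-(r * sin θ)) + 2 * (r * sin θ - y.2) * (r * cos θ)) θ :=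
    ((((hasDerivAt_cos θ).const_mul r).sub_const y.1).fun_pow 2).fun_add
      ((((hasDerivAt_sin θ).const_mul r).sub_const y.2).fun_pow 2) |>.congr_deriv (by ring)
  refine ((hD.log hθ).fun_neg.div_const 2).congr_deriv ?_
  rw [fluxKernel]
  field_simp
  ring

lemma integral_fluxKernel_eq_zero {r : ℝ} {y : ℝ × ℝ} (hy : y.1 ^ 2 + y.2 ^ 2 ≠ r ^ 2) :
    ∫ θ in (0)..(2 * π), fluxKernel r θ y = 0 := by
  have hcont : Continuous fun θ => fluxKernel r θ y :=
    Continuous.div (by fun_prop) (by fun_prop) (sq_add_sq_ne_zero_of_ne_sq hy)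
  rw [intervalIntegral.integral_eq_sub_of_hasDerivAt (fun θ _ =>
    hasDerivAt_neg_log_sq_add_sq_div_two (sq_add_sq_ne_zero_of_ne_sq hy θ))
    (hcont.intervalIntegrable _ _)]
  simp

lemma norm_mul_cos_mul_sin_le (r θ : ℝ) : ‖(r * cos θ, r * sin θ)‖ ≤ |r| := by
  rw [Prod.norm_def, Real.norm_eq_abs, Real.norm_eq_abs, abs_mul, abs_mul, max_le_iff]
  exact ⟨mul_le_of_le_one_right (abs_nonneg r) (abs_cos_le_one θ),
    mul_le_of_le_one_right (abs_nonneg r) (abs_sin_le_one θ)⟩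

section Flux

variable {ω : ℝ × ℝ → ℝ} {C : ℝ}

lemma integrableOn_annulus_mul_div_sq_add_sq
    (hω : AEStronglyMeasurable ω (volume.restrict annulus)) (hC : ∀ y ∈ annulus, |ω y| ≤ C)
    (x : ℝ × ℝ) {c : ℝ × ℝ → ℝ} (hc_meas : Measurable c)
    (hc : ∀ y, |c y| ≤ ‖x - y‖) :
    IntegrableOn (fun y => ω y * c y / ((x.1 - y.1) ^ 2 + (x.2 - y.2) ^ 2)) annulus := by
  have := hω.aemeasurable
  refine integrableOn_annulus_of_abs_le_inv_norm_sub (C := C * 1)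
    (by fun_prop : AEMeasurable _ _).aestronglyMeasurable x fun y hy => ?_
  exact abs_mul_div_sq_add_sq_le (z := x - y) (hC y hy) (by rw [one_mul]; exact hc y)

lemma flux_integrand_eq (hω : AEStronglyMeasurable ω (volume.restrict annulus))
    (hC : ∀ y ∈ annulus, |ω y| ≤ C) (r θ : ℝ) :
    (biotSavart₁ ω (r * cos θ, r * sin θ) * cos θ +
        biotSavart₂ ω (r * cos θ, r * sin θ) * sin θ) * r =
      1 / (2 * π) * ∫ y in annulus, ω y * fluxKernel r θ y := by
  set x : ℝ × ℝ := (r * cos θ, r * sin θ)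
  have h₁ := integrableOn_annulus_mul_div_sq_add_sq hω hC x (c := fun y => -(x.2 - y.2))
    (by fun_prop) fun y => (abs_neg _).trans_le (norm_snd_le (x - y))
  have h₂ := integrableOn_annulus_mul_div_sq_add_sq hω hC x (c := fun y => x.1 - y.1)
    (by fun_prop) fun y => norm_fst_le (x - y)
  rw [biotSavart₁, biotSavart₂, mul_assoc, mul_assoc, ← mul_add, mul_assoc,
    ← integral_mul_const, ← integral_mul_const,
    ← integral_add (h₁.mul_const _) (h₂.mul_const _), ← integral_mul_const]
  congr 2 with y
  rw [fluxKernel]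
  ring

lemma integrable_flux_integrand (hω : AEStronglyMeasurable ω (volume.restrict annulus))
    (hC : ∀ y ∈ annulus, |ω y| ≤ C) (r : ℝ) {μ : Measure ℝ} [IsFiniteMeasure μ] :
    Integrable (fun p : ℝ × (ℝ × ℝ) => ω p.2 * fluxKernel r p.1 p.2)
      (μ.prod (volume.restrict annulus)) := by
  have hK : Measurable fun p : ℝ × (ℝ × ℝ) => fluxKernel r p.1 p.2 := by
    unfold fluxKernel; fun_prop
  exact integrable_prod_annulus_of_abs_le_inv_norm_sub
    (hω.comp_snd.mul hK.aestronglyMeasurable) (x := fun θ => (r * cos θ, r * sin θ))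
    (by fun_prop) (norm_mul_cos_mul_sin_le r)
    fun θ y hy => abs_mul_fluxKernel_le (hC y hy) r θ y

theorem integral_flux_biotSavart_eq_zero (hω : AEStronglyMeasurable ω (volume.restrict annulus))
    (hC : ∀ y ∈ annulus, |ω y| ≤ C) (r : ℝ) :
    ∫ θ in (0)..(2 * π), (biotSavart₁ ω (r * cos θ, r * sin θ) * cos θ +
        biotSavart₂ ω (r * cos θ, r * sin θ) * sin θ) * r = 0 := by
  have h_off_circle : ∀ᵐ y ∂(volume.restrict annulus), y.1 ^ 2 + y.2 ^ 2 ≠ r ^ 2 :=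
    ae_restrict_of_ae (measure_eq_zero_iff_ae_notMem.1 (volume_setOf_sq_add_sq_eq r))
  calc _ = ∫ θ in (0)..(2 * π), 1 / (2 * π) * ∫ y in annulus, ω y * fluxKernel r θ y :=
        intervalIntegral.integral_congr fun θ _ => flux_integrand_eq hω hC r θ
    _ = 1 / (2 * π) * ∫ y in annulus, ω y * ∫ θ in (0)..(2 * π), fluxKernel r θ y := by
        have : IsFiniteMeasure (volume.restrict (uIoc 0 (2 * π))) := by
          unfold uIoc; infer_instance
        rw [intervalIntegral.integral_const_mul,
          intervalIntegral_integral_swap (integrable_flux_integrand hω hC r)]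
        simp_rw [intervalIntegral.integral_const_mul]
    _ = 0 := by
        rw [integral_eq_zero_of_ae, mul_zero]
        filter_upwards [h_off_circle] with y hy
        rw [integral_fluxKernel_eq_zero hy, mul_zero, Pi.zero_apply]

end Flux

/-- The Biot–Savart field of a continuous vorticity on the annulus has zero flux
through each boundary circle (`r = 1` and `r = 2`). -/
theorem biotSavart_flux_zero (ω : ℝ × ℝ → ℝ) (hω : ContinuousOn ω annulus) :
    ∀ r ∈ ({1, 2} : Set ℝ),
      (∫ θ in (0 : ℝ)..(2 * π),
        (biotSavart₁ ω (r * Real.cos θ, r * Real.sin θ) * Real.cos θ +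
         biotSavart₂ ω (r * Real.cos θ, r * Real.sin θ) * Real.sin θ) * r) = 0 := by
  obtain ⟨C, hC⟩ := isCompact_annulus.exists_bound_of_continuousOn hω
  exact fun r _ =>
    integral_flux_biotSavart_eq_zero (hω.aestronglyMeasurable measurableSet_annulus) hC r
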